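/- There exists a constant c'_d > 0 depending only on d such that the following holds. Let E be a positive integer which is a sum of d squares, λ = √E, and r_d(λ) = #{k ∈ ℤ^d : ‖k‖ = λ} > 0. Then for every a ∈ L²(𝕋^d) and every orthonormal basis (ψ_1, …, ψ_{r_d(λ)}) of the eigenspace V_E, one has (1/r_d(λ)) · ∑_i |∫_{𝕋^d} a|ψ_i|² dx − ∫_{𝕋^d} a dx|² ≤ ‖a‖²_{L²(𝕋^d)} · min{1, c'_d λ^{d−2}/r_d(λ)}. -/

import Mathlib

open MeasureTheory Real BigOperators ComplexConjugate

noncomputable section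

instance : Fact (0 < 2 * π) := ⟨by positivity⟩

/-- The flat torus `𝕋^d = ℝ^d/(2πℤ)^d`. -/
abbrev Td (d : ℕ) := Fin d → AddCircle (2 * π)

/-- The normalized Haar probability measure on the flat torus. -/
def haarT (d : ℕ) : Measure (Td d) :=
  Measure.pi fun _ : Fin d => AddCircle.haarAddCircle

/-- The character `e_k(x) = e^{i⟨k,x⟩}` for `k ∈ ℤ^d`. -/
def eChar {d : ℕ} (k : Fin d → ℤ) (x : Td d) : ℂ := ∏ i, fourier (k i) (x i)

/-- Euclidean norm of a lattice point of `ℤ^d`. -/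
def znorm {d : ℕ} (k : Fin d → ℤ) : ℝ := Real.sqrt (∑ i, ((k i : ℝ)) ^ 2)

/-- The primitive lattice point `n̂` generating `n ≠ 0`: divide out the gcd of coordinates. -/
def primPart {d : ℕ} (n : Fin d → ℤ) : Fin d → ℤ := fun i => n i / Finset.univ.gcd n

/-- Fourier coefficient `â_n = ∫ a(x) e^{-i⟨n,x⟩} dx` of `a ∈ L²(𝕋^d)`. -/
def fcoef {d : ℕ} (a : Td d → ℂ) (n : Fin d → ℤ) : ℂ :=
  ∫ x, a x * conj (eChar n x) ∂(haarT d)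

/-- Fourier transform `μ̂(n) = ∫ e^{-i⟨n,x⟩} dμ(x)` of a measure on `𝕋^d`. -/
def muF {d : ℕ} (μ : Measure (Td d)) (n : Fin d → ℤ) : ℂ :=
  ∫ x, conj (eChar n x) ∂μ

/-- `N(λ) = #{k ∈ ℤ^d : ‖k‖ ≤ λ}`, the spectral counting function. -/
def latticeCount (d : ℕ) (lam : ℝ) : ℕ := Set.ncard {k : Fin d → ℤ | znorm k ≤ lam}

/-- An eigenbasis of `L²(𝕋^d)`: an orthonormal basis `(ψ_j)` of Laplace eigenfunctions
`ψ_j = ∑_{‖k‖ = Λ j} c_j(k) e_k`, with nondecreasing eigenvalues `(Λ j)²` (nonnegative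
integers), orthonormality and completeness expressed via the Fourier coefficients. -/
structure Eigenbasis (d : ℕ) where
  ψ : ℕ → Td d → ℂ
  Λ : ℕ → ℝ
  c : ℕ → (Fin d → ℤ) → ℂ
  nonneg : ∀ j, 0 ≤ Λ j
  mono : Monotone Λ
  eig_int : ∀ j, ∃ E : ℕ, Λ j ^ 2 = E
  repr : ∀ j x, ψ j x = ∑' k : Fin d → ℤ, c j k * eChar k x
  supp : ∀ j k, c j k ≠ 0 → znorm k = Λ j
  ortho : ∀ i j, ∑' k : Fin d → ℤ, c i k * conj (c j k) = if i = j then 1 else 0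
  complete : ∀ k l : Fin d → ℤ, ∑' j : ℕ, c j k * conj (c j l) = if k = l then 1 else 0

/-- A function on the torus is smooth if its `(2πℤ)^d`-periodic lift to `ℝ^d` is `C^∞`. -/
def SmoothOnTorus {d : ℕ} (a : Td d → ℂ) : Prop :=
  ContDiff ℝ (⊤ : ℕ∞) fun x : Fin d → ℝ => a fun i => (x i : AddCircle (2 * π))

/-!
Write `ψᵢ = ∑_{‖k‖² = E} cᵢ(k) eₖ`. Then `∫ a |ψᵢ|² - ∫ a = ∑_{k ≠ l} cᵢ(k) c̄ᵢ(l) â(l - k)` is the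
inner product of `c̄ᵢ ⊗ cᵢ` with the matrix `A(k, l) = â(l - k)` (`k ≠ l`, and `0` on the
diagonal). The tensors `c̄ᵢ ⊗ cᵢ` are orthonormal, so by Bessel's inequality the sum over `i` is at
most `‖A‖² = ∑_{n ≠ 0} #{(k, l) : l - k = n} |â(n)|²`, and Bessel's inequality for the characters
bounds `∑ |â(n)|²` by `‖a‖²`. Each count `#{(k, l) : l - k = n}` is at most `r`, and at most
`2 (2√E + 1)^(d - 2)`: such `k` lie on the sphere and on the hyperplane `2⟨k, n⟩ = -‖n‖²`, and once
all coordinates but two (one of them with `nᵢ ≠ 0`) are fixed, a line meets a circle in at most two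
points.
-/

theorem card_le_two_of_mem_circle_of_mem_line {s : Finset (ℤ × ℤ)} {a b A B : ℤ} (ha : a ≠ 0)
    (hs : ∀ p ∈ s, p.1 ^ 2 + p.2 ^ 2 = A ∧ a * p.1 + b * p.2 = B) : s.card ≤ 2 := by
  have eq_of_snd_eq : ∀ p ∈ s, ∀ q ∈ s, p.2 = q.2 → p = q := by
    intro p hp q hq h
    have hline : a * p.1 = a * q.1 := by linear_combination (hs p hp).2 - (hs q hq).2 - b * h
    exact Prod.ext (mul_left_cancel₀ ha hline) h
  -- the second coordinates are roots of the quadratic `(a² + b²) y² - 2bB y + B² - a²A`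
  have vieta : ∀ p ∈ s, ∀ q ∈ s, p ≠ q → (a ^ 2 + b ^ 2) * (p.2 + q.2) = 2 * b * B := by
    intro p hp q hq hpq
    obtain ⟨hp₁, hp₂⟩ := hs p hp
    obtain ⟨hq₁, hq₂⟩ := hs q hq
    have h : (p.2 - q.2) * ((a ^ 2 + b ^ 2) * (p.2 + q.2) - 2 * b * B) = 0 := by
      linear_combination a ^ 2 * (hp₁ - hq₁) - (a * p.1 + B - b * p.2) * hp₂
        + (a * q.1 + B - b * q.2) * hq₂
    have hne : p.2 - q.2 ≠ 0 := sub_ne_zero.mpr fun h => hpq (eq_of_snd_eq p hp q hq h)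
    linarith [(mul_eq_zero.mp h).resolve_left hne]
  by_contra! hcard
  obtain ⟨p, hp, q, hq, r, hr, hpq, hpr, hqr⟩ := Finset.two_lt_card.mp hcard
  have hab : 0 < a ^ 2 + b ^ 2 := by positivity
  have : q.2 = r.2 := by nlinarith [vieta p hp q hq hpq, vieta p hp r hr hpr]
  exact hqr (eq_of_snd_eq q hq r hr this)

theorem card_filter_sub_eq_le {G : Type*} [AddCommGroup G] [DecidableEq G] (s : Finset G) (n : G) :
    ((s ×ˢ s).filter fun p => p.2 - p.1 = n).card ≤ (s.filter fun k => k + n ∈ s).card := by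
  refine Finset.card_le_card_of_injOn Prod.fst (fun p hp => ?_) fun p hp q hq h => ?_
  · obtain ⟨hps, hpn⟩ := Finset.mem_filter.mp hp
    rw [Finset.mem_product] at hps
    exact Finset.mem_filter.mpr ⟨hps.1, by rw [← hpn, add_sub_cancel]; exact hps.2⟩
  · have hp₂ := (Finset.mem_filter.mp hp).2
    have hq₂ := (Finset.mem_filter.mp hq).2
    exact Prod.ext h (by rw [← sub_add_cancel p.2 p.1, ← sub_add_cancel q.2 q.1, hp₂, hq₂, h])

theorem sum_sum_comp_sub_le {G : Type*} [AddCommGroup G] [DecidableEq G] (s : Finset G)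
    {h : G → ℝ} (h0 : h 0 = 0) (hnn : ∀ n, 0 ≤ h n) {M : ℝ}
    (hM : ∀ n ≠ 0, ((s.filter fun k => k + n ∈ s).card : ℝ) ≤ M) :
    ∑ k ∈ s, ∑ l ∈ s, h (l - k) ≤ M * ∑ n ∈ (s ×ˢ s).image (fun p => p.2 - p.1), h n := by
  rw [← Finset.sum_product' (f := fun k l => h (l - k)), Finset.sum_comp, Finset.mul_sum]
  refine Finset.sum_le_sum fun n _ => ?_
  rw [nsmul_eq_mul]
  rcases eq_or_ne n 0 with rfl | hn
  · simp [h0]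
  · exact mul_le_mul_of_nonneg_right
      ((Nat.cast_le.mpr (card_filter_sub_eq_le s n)).trans (hM n hn)) (hnn n)

theorem sum_norm_sq_sum_sum_mul_conj_le {ι α : Type*} [Fintype ι] [DecidableEq ι]
    (s : Finset α) (c : ι → α → ℂ)
    (hc : ∀ i j, ∑ k ∈ s, c i k * conj (c j k) = if i = j then 1 else 0) (F : α → α → ℂ) :
    ∑ i, ‖∑ k ∈ s, ∑ l ∈ s, c i k * conj (c i l) * F k l‖ ^ 2 ≤ ∑ k ∈ s, ∑ l ∈ s, ‖F k l‖ ^ 2 := by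
  have sum_prod : ∀ {M : Type} [AddCommMonoid M] (f : α → α → M),
      ∑ p : s × s, f p.1 p.2 = ∑ k ∈ s, ∑ l ∈ s, f k l := fun f => by
    rw [Fintype.sum_prod_type]
    simp only [Finset.sum_coe_sort s fun k => ∑ l ∈ s, f k l, Finset.sum_coe_sort s (f _)]
  let v : ι → EuclideanSpace ℂ (s × s) := fun i => WithLp.toLp 2 fun p => conj (c i p.1) * c i p.2
  let A : EuclideanSpace ℂ (s × s) := WithLp.toLp 2 fun p => F p.1 p.2
  have hv : Orthonormal ℂ v := by
    rw [orthonormal_iff_ite]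
    intro i j
    have : inner ℂ (v i) (v j)
        = (∑ k ∈ s, c i k * conj (c j k)) * conj (∑ l ∈ s, c i l * conj (c j l)) := by
      simp only [v, PiLp.inner_apply, RCLike.inner_apply', map_sum, Finset.sum_mul_sum]
      rw [← sum_prod]
      refine Finset.sum_congr rfl fun p _ => ?_
      simp only [map_mul, Complex.conj_conj]
      ring
    rw [this, hc]
    split_ifs <;> simp
  have hinner : ∀ i, inner ℂ (v i) A = ∑ k ∈ s, ∑ l ∈ s, c i k * conj (c i l) * F k l := by
    intro i
    simp only [v, A, PiLp.inner_apply, RCLike.inner_apply', map_mul, Complex.conj_conj]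
    rw [← sum_prod]
  have hA : ‖A‖ ^ 2 = ∑ k ∈ s, ∑ l ∈ s, ‖F k l‖ ^ 2 := by
    rw [EuclideanSpace.norm_sq_eq, ← sum_prod]
  simpa only [hinner, hA] using hv.sum_inner_products_le (s := Finset.univ) A

section

variable {d : ℕ}

instance : IsProbabilityMeasure (haarT d) := by
  unfold haarT; infer_instance

theorem continuous_eChar (k : Fin d → ℤ) : Continuous (eChar k) :=
  continuous_finsetProd _ fun i _ => (fourier (k i)).continuous.comp (continuous_apply i)

theorem norm_eChar (k : Fin d → ℤ) (x : Td d) : ‖eChar k x‖ = 1 := by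
  simp [eChar, norm_prod, Circle.norm_coe]

theorem eChar_zero (x : Td d) : eChar 0 x = 1 := by
  simp [eChar]

theorem eChar_add (k l : Fin d → ℤ) (x : Td d) : eChar (k + l) x = eChar k x * eChar l x := by
  simp [eChar, Finset.prod_mul_distrib]

theorem conj_eChar (k : Fin d → ℤ) (x : Td d) : conj (eChar k x) = eChar (-k) x := by
  simp [eChar, map_prod]

theorem eChar_mul_conj (k l : Fin d → ℤ) (x : Td d) :
    eChar k x * conj (eChar l x) = eChar (k - l) x := by
  rw [conj_eChar, ← eChar_add, sub_eq_add_neg]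

theorem integral_fourier_haarAddCircle {T : ℝ} [Fact (0 < T)] (n : ℤ) :
    ∫ x, fourier n x ∂(AddCircle.haarAddCircle (T := T)) = if n = 0 then 1 else 0 := by
  split_ifs with h
  · simp [h]
  · exact integral_eq_zero_of_add_right_eq_neg (fourier_add_half_inv_index h (Fact.out))

theorem integral_eChar (k : Fin d → ℤ) : ∫ x, eChar k x ∂(haarT d) = if k = 0 then 1 else 0 := by
  simp only [eChar, haarT, integral_fintype_prod_eq_prod, integral_fourier_haarAddCircle]
  split_ifs with h
  · simp [h]
  · obtain ⟨i, hi⟩ := Function.ne_iff.mp h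
    exact Finset.prod_eq_zero (Finset.mem_univ i) (if_neg hi)

theorem memLp_eChar (k : Fin d → ℤ) (p : ENNReal) : MemLp (eChar k) p (haarT d) :=
  MemLp.of_bound (continuous_eChar k).aestronglyMeasurable 1
    (Filter.Eventually.of_forall fun x => (norm_eChar k x).le)

theorem MeasureTheory.Integrable.mul_conj_eChar {a : Td d → ℂ} (ha : Integrable a (haarT d))
    (k : Fin d → ℤ) :
    Integrable (fun x => a x * conj (eChar k x)) (haarT d) :=
  ha.mul_bdd (continuous_eChar k).star.aestronglyMeasurable
    (Filter.Eventually.of_forall fun x => by rw [RCLike.norm_conj, norm_eChar])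

theorem fcoef_zero (a : Td d → ℂ) : fcoef a 0 = ∫ x, a x ∂(haarT d) := by
  simp [fcoef, eChar_zero]

theorem orthonormal_toLp_eChar :
    Orthonormal ℂ fun k : Fin d → ℤ => (memLp_eChar k 2).toLp (eChar k) := by
  rw [orthonormal_iff_ite]
  intro k l
  rw [show (if k = l then (1 : ℂ) else 0) = if l - k = 0 then 1 else 0 by
    simp [sub_eq_zero, eq_comm], L2.inner_def, ← integral_eChar]
  refine integral_congr_ae ?_
  filter_upwards [(memLp_eChar k 2).coeFn_toLp, (memLp_eChar l 2).coeFn_toLp] with x hk hl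
  rw [hk, hl, RCLike.inner_apply', mul_comm, eChar_mul_conj]

theorem inner_toLp_eChar {a : Td d → ℂ} (ha : MemLp a 2 (haarT d)) (k : Fin d → ℤ) :
    inner ℂ ((memLp_eChar k 2).toLp (eChar k)) (ha.toLp a) = fcoef a k := by
  rw [L2.inner_def]
  refine integral_congr_ae ?_
  filter_upwards [ha.coeFn_toLp, (memLp_eChar k 2).coeFn_toLp] with x ha hk
  rw [ha, hk, RCLike.inner_apply', mul_comm]

theorem MeasureTheory.MemLp.norm_toLp_sq {α : Type*} [MeasurableSpace α] {μ : Measure α}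
    {f : α → ℂ} (hf : MemLp f 2 μ) : ‖hf.toLp f‖ ^ 2 = ∫ x, ‖f x‖ ^ 2 ∂μ := by
  rw [← RCLike.ofReal_inj (K := ℂ), RCLike.ofReal_pow, ← inner_self_eq_norm_sq_to_K, L2.inner_def,
    ← integral_ofReal]
  refine integral_congr_ae ?_
  filter_upwards [hf.coeFn_toLp] with x hx
  rw [hx, inner_self_eq_norm_sq_to_K]
  norm_cast

theorem sum_norm_sq_fcoef_le {a : Td d → ℂ} (ha : MemLp a 2 (haarT d)) (T : Finset (Fin d → ℤ)) :
    ∑ k ∈ T, ‖fcoef a k‖ ^ 2 ≤ ∫ x, ‖a x‖ ^ 2 ∂(haarT d) := by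
  simpa only [inner_toLp_eChar ha, ha.norm_toLp_sq] using
    orthonormal_toLp_eChar.sum_inner_products_le (s := T) (ha.toLp a)

theorem integral_mul_norm_sum_sq_eq {a : Td d → ℂ} (ha : Integrable a (haarT d))
    (s : Finset (Fin d → ℤ)) (c : (Fin d → ℤ) → ℂ) :
    ∫ x, a x * ((‖∑ k ∈ s, c k * eChar k x‖ ^ 2 : ℝ) : ℂ) ∂(haarT d)
      = ∑ k ∈ s, ∑ l ∈ s, c k * conj (c l) * fcoef a (l - k) := by
  have expand : ∀ x, a x * ((‖∑ k ∈ s, c k * eChar k x‖ ^ 2 : ℝ) : ℂ)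
      = ∑ k ∈ s, ∑ l ∈ s, c k * conj (c l) * (a x * conj (eChar (l - k) x)) := by
    intro x
    rw [Complex.ofReal_pow, ← Complex.mul_conj', map_sum, Finset.sum_mul_sum, Finset.mul_sum]
    refine Finset.sum_congr rfl fun k _ => ?_
    rw [Finset.mul_sum]
    refine Finset.sum_congr rfl fun l _ => ?_
    rw [conj_eChar, neg_sub, ← eChar_mul_conj, map_mul]
    ring
  simp_rw [expand]
  rw [integral_finsetSum _ fun k _ => integrable_finsetSum _ fun l _ =>
    (ha.mul_conj_eChar _).const_mul _]
  refine Finset.sum_congr rfl fun k _ => ?_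
  rw [integral_finsetSum _ fun l _ => (ha.mul_conj_eChar _).const_mul _]
  exact Finset.sum_congr rfl fun l _ => integral_const_mul _ _

theorem integral_eq_sum_sum_mul_conj_ite {ι : Type*} [DecidableEq ι] (a : Td d → ℂ)
    (s : Finset (Fin d → ℤ)) (c : ι → (Fin d → ℤ) → ℂ)
    (hc : ∀ i j, ∑ k ∈ s, c i k * conj (c j k) = if i = j then 1 else 0) (i : ι) :
    ∫ x, a x ∂(haarT d)
      = ∑ k ∈ s, ∑ l ∈ s, c i k * conj (c i l) * if l - k = 0 then fcoef a 0 else 0 := by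
  simp_rw [sub_eq_zero, mul_ite, mul_zero, Finset.sum_ite_eq', ← Finset.sum_filter,
    Finset.filter_mem_eq_inter, Finset.inter_self, ← Finset.sum_mul, hc i i, if_pos, one_mul,
    fcoef_zero]

theorem sum_norm_sq_integral_mul_norm_sum_sq_sub_le {ι : Type*} [Fintype ι] [DecidableEq ι]
    {a : Td d → ℂ} (ha : MemLp a 2 (haarT d)) (s : Finset (Fin d → ℤ)) (c : ι → (Fin d → ℤ) → ℂ)
    (hc : ∀ i j, ∑ k ∈ s, c i k * conj (c j k) = if i = j then 1 else 0) {M : ℝ} (hM₀ : 0 ≤ M)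
    (hM : ∀ n ≠ 0, ((s.filter fun k => k + n ∈ s).card : ℝ) ≤ M) :
    ∑ i, ‖∫ x, a x * ((‖∑ k ∈ s, c i k * eChar k x‖ ^ 2 : ℝ) : ℂ) ∂(haarT d)
        - ∫ x, a x ∂(haarT d)‖ ^ 2 ≤ M * ∫ x, ‖a x‖ ^ 2 ∂(haarT d) := by
  set G : (Fin d → ℤ) → ℂ := fun n => if n = 0 then 0 else fcoef a n
  have hdiff : ∀ i, ∫ x, a x * ((‖∑ k ∈ s, c i k * eChar k x‖ ^ 2 : ℝ) : ℂ) ∂(haarT d)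
      - ∫ x, a x ∂(haarT d) = ∑ k ∈ s, ∑ l ∈ s, c i k * conj (c i l) * G (l - k) := by
    intro i
    rw [integral_mul_norm_sum_sq_eq (ha.integrable one_le_two),
      integral_eq_sum_sum_mul_conj_ite a s c hc i, ← Finset.sum_sub_distrib]
    refine Finset.sum_congr rfl fun k _ => ?_
    rw [← Finset.sum_sub_distrib]
    refine Finset.sum_congr rfl fun l _ => ?_
    simp only [G]
    split_ifs with h <;> simp [h]
  let T := (s ×ˢ s).image fun p => p.2 - p.1
  calc _ = ∑ i, ‖∑ k ∈ s, ∑ l ∈ s, c i k * conj (c i l) * G (l - k)‖ ^ 2 := by simp_rw [hdiff]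
    _ ≤ ∑ k ∈ s, ∑ l ∈ s, ‖G (l - k)‖ ^ 2 := sum_norm_sq_sum_sum_mul_conj_le s c hc _
    _ ≤ M * ∑ n ∈ T, ‖G n‖ ^ 2 :=
        sum_sum_comp_sub_le s (h := fun n => ‖G n‖ ^ 2) (by simp [G]) (fun n => by positivity) hM
    _ ≤ M * ∑ n ∈ T, ‖fcoef a n‖ ^ 2 := by
        gcongr with n
        simp only [G]
        split_ifs <;> simp
    _ ≤ M * ∫ x, ‖a x‖ ^ 2 ∂(haarT d) := by gcongr; exact sum_norm_sq_fcoef_le ha T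

theorem mem_Icc_sqrt_of_sum_sq_eq {ι : Type*} [Fintype ι] {E : ℕ} {k : ι → ℤ}
    (hk : ∑ i, k i ^ 2 = E) (j : ι) :
    k j ∈ Finset.Icc (-(Nat.sqrt E : ℤ)) (Nat.sqrt E) := by
  have hsq : k j ^ 2 ≤ E :=
    hk ▸ Finset.single_le_sum (fun i _ => sq_nonneg (k i)) (Finset.mem_univ j)
  have : (k j).natAbs ≤ Nat.sqrt E := Nat.le_sqrt'.mpr (by zify; simpa [sq_abs] using hsq)
  rw [Finset.mem_Icc, ← abs_le, Int.abs_eq_natAbs]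
  exact_mod_cast this

def latticeSphere (d E : ℕ) : Finset (Fin d → ℤ) :=
  (Fintype.piFinset fun _ => Finset.Icc (-(Nat.sqrt E : ℤ)) (Nat.sqrt E)).filter
    fun k => ∑ i, k i ^ 2 = E

theorem mem_latticeSphere {E : ℕ} {k : Fin d → ℤ} : k ∈ latticeSphere d E ↔ ∑ i, k i ^ 2 = E := by
  simp only [latticeSphere, Finset.mem_filter, Fintype.mem_piFinset, and_iff_right_iff_imp]
  exact mem_Icc_sqrt_of_sum_sq_eq

theorem card_latticeSphere_filter_inner_le (hd : 2 ≤ d) (E : ℕ) {n : Fin d → ℤ} (hn : n ≠ 0)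
    (B : ℤ) : ((latticeSphere d E).filter fun k => ∑ j, n j * k j = B).card
      ≤ 2 * (2 * Nat.sqrt E + 1) ^ (d - 2) := by
  classical
  obtain ⟨i, hi⟩ : ∃ i, n i ≠ 0 := Function.ne_iff.mp hn
  obtain ⟨i', hi'⟩ := Fintype.exists_ne_of_one_lt_card (by simp only [Fintype.card_fin]; omega) i
  set t : Finset (Fin d) := {i, i'}
  set K := (latticeSphere d E).filter fun k => ∑ j, n j * k j = B
  set M : ℤ := (Nat.sqrt E : ℤ)
  let φ : (Fin d → ℤ) → (Fin d → ℤ) := fun k j => if j ∈ t then 0 else k j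
  have split : ∀ f : Fin d → ℤ, ∑ j, f j = f i + f i' + ∑ j ∈ tᶜ, f j := fun f => by
    rw [← Finset.sum_add_sum_compl t, Finset.sum_pair hi'.symm]
  have hfiber : ∀ b ∈ K.image φ, (K.filter (φ · = b)).card ≤ 2 := by
    intro b _
    have off : ∀ k ∈ K.filter (φ · = b), ∀ j ∈ tᶜ, k j = b j := by
      intro k hk j hj
      have := congrFun (Finset.mem_filter.mp hk).2 j
      simpa [φ, Finset.mem_compl.mp hj] using this
    rw [← Finset.card_image_of_injOn (f := fun k => (k i, k i'))]
    · refine card_le_two_of_mem_circle_of_mem_line hi (b := n i') (A := E - ∑ j ∈ tᶜ, b j ^ 2)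
        (B := B - ∑ j ∈ tᶜ, n j * b j) ?_
      simp only [Finset.forall_mem_image]
      intro k hk
      obtain ⟨hkK, -⟩ := Finset.mem_filter.mp hk
      obtain ⟨hsph, hpl⟩ := Finset.mem_filter.mp hkK
      rw [mem_latticeSphere, split] at hsph
      rw [split] at hpl
      rw [Finset.sum_congr rfl fun j hj => by rw [off k hk j hj]] at hsph hpl
      constructor <;> linarith
    · intro k hk k' hk' h
      simp only [Prod.mk.injEq] at h
      funext j
      by_cases hj : j ∈ t
      · rcases Finset.mem_insert.mp hj with rfl | hj
        · exact h.1
        · rw [Finset.mem_singleton.mp hj]; exact h.2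
      · rw [off k hk j (Finset.mem_compl.mpr hj), off k' hk' j (Finset.mem_compl.mpr hj)]
  let box := Fintype.piFinset fun j => if j ∈ t then {0} else Finset.Icc (-M) M
  have himage : K.image φ ⊆ box := by
    simp only [Finset.image_subset_iff, Fintype.mem_piFinset, box]
    intro k hk j
    by_cases hj : j ∈ t
    · simp [φ, hj]
    · simpa [φ, hj] using mem_Icc_sqrt_of_sum_sq_eq
        (mem_latticeSphere.mp (Finset.mem_filter.mp hk).1) j
  have hbox : box.card = (2 * Nat.sqrt E + 1) ^ (d - 2) := by
    simp only [box, Fintype.card_piFinset, apply_ite Finset.card, Finset.card_singleton,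
      Int.card_Icc, Finset.prod_ite, Finset.prod_const_one, Finset.prod_const, one_mul,
      Finset.filter_not, Finset.filter_mem_eq_inter, Finset.univ_inter, Finset.card_univ_sdiff,
      Fintype.card_fin, t, Finset.card_pair hi'.symm]
    congr 1
    omega
  calc K.card ≤ 2 * (K.image φ).card := Finset.card_le_mul_card_image K 2 hfiber
    _ ≤ 2 * box.card := Nat.mul_le_mul_left 2 (Finset.card_le_card himage)
    _ = 2 * (2 * Nat.sqrt E + 1) ^ (d - 2) := by rw [hbox]

theorem card_latticeSphere_filter_add_mem_le (hd : 2 ≤ d) (E : ℕ) {n : Fin d → ℤ} (hn : n ≠ 0) :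
    ((latticeSphere d E).filter fun k => k + n ∈ latticeSphere d E).card
      ≤ 2 * (2 * Nat.sqrt E + 1) ^ (d - 2) := by
  refine le_trans (Finset.card_le_card ?_) (card_latticeSphere_filter_inner_le hd E
    (n := 2 • n) (smul_ne_zero two_ne_zero hn) (-∑ j, n j ^ 2))
  intro k hk
  obtain ⟨hk, hkn⟩ := Finset.mem_filter.mp hk
  refine Finset.mem_filter.mpr ⟨hk, ?_⟩
  rw [mem_latticeSphere] at hk hkn
  have expand : ∑ j, (k + n) j ^ 2 = ∑ j, k j ^ 2 + ∑ j, (2 • n) j * k j + ∑ j, n j ^ 2 := by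
    rw [← Finset.sum_add_distrib, ← Finset.sum_add_distrib]
    exact Finset.sum_congr rfl fun j _ => by simp only [Pi.add_apply, Pi.smul_apply]; ring
  linarith

theorem card_latticeSphere_filter_add_mem_le_sqrt (hd : 2 ≤ d) {E : ℕ} (hE : 0 < E)
    {n : Fin d → ℤ} (hn : n ≠ 0) :
    (((latticeSphere d E).filter fun k => k + n ∈ latticeSphere d E).card : ℝ)
      ≤ 2 * 3 ^ (d - 2) * √E ^ (d - 2) := by
  have hsqrt : (2 * Nat.sqrt E + 1 : ℝ) ≤ 3 * √E := by
    have : (1 : ℝ) ≤ √E := Real.one_le_sqrt.mpr (by exact_mod_cast hE)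
    linarith [Real.nat_sqrt_le_real_sqrt (a := E)]
  calc _ ≤ (2 * (2 * Nat.sqrt E + 1) ^ (d - 2) : ℝ) := by
        exact_mod_cast card_latticeSphere_filter_add_mem_le hd E hn
    _ ≤ 2 * (3 * √E) ^ (d - 2) := by gcongr
    _ = 2 * 3 ^ (d - 2) * √E ^ (d - 2) := by ring

theorem sq_znorm_eq_iff_mem_latticeSphere {E : ℕ} {k : Fin d → ℤ} :
    znorm k ^ 2 = E ↔ k ∈ latticeSphere d E := by
  rw [mem_latticeSphere, znorm, Real.sq_sqrt (by positivity)]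
  norm_cast

end

/-- quantum variance on an individual eigenspace, normalized by its dimension. -/
theorem statement8 (d : ℕ) (hd : 2 ≤ d) :
    ∃ c' : ℝ, 0 < c' ∧ ∀ E : ℕ, 0 < E →
      ∀ r : ℕ, r = Set.ncard {k : Fin d → ℤ | znorm k ^ 2 = E} → 0 < r →
      ∀ a : Td d → ℂ, MemLp a 2 (haarT d) →
      ∀ (ψ : Fin r → Td d → ℂ) (c : Fin r → (Fin d → ℤ) → ℂ),
        (∀ i k, c i k ≠ 0 → znorm k ^ 2 = E) →
        (∀ i x, ψ i x = ∑' k : Fin d → ℤ, c i k * eChar k x) →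
        (∀ i j, ∑' k : Fin d → ℤ, c i k * conj (c j k) = if i = j then 1 else 0) →
        (∀ k l : Fin d → ℤ, znorm k ^ 2 = E → znorm l ^ 2 = E →
          ∑ i, c i k * conj (c i l) = if k = l then 1 else 0) →
        (1 / (r : ℝ)) *
            ∑ i, ‖(∫ x, a x * ((‖ψ i x‖ ^ 2 : ℝ) : ℂ) ∂(haarT d)) - ∫ x, a x ∂(haarT d)‖ ^ 2
          ≤ (∫ x, ‖a x‖ ^ 2 ∂(haarT d)) * min 1 (c' * Real.sqrt E ^ (d - 2) / r) := by
  refine ⟨2 * 3 ^ (d - 2), by positivity, ?_⟩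
  intro E hE r hr hr₀ a ha ψ c hsupp hψ hortho _
  have hrS : r = (latticeSphere d E).card := by
    simp_rw [hr, sq_znorm_eq_iff_mem_latticeSphere, Finset.setOfPred_mem, Set.ncard_coe_finset]
  set S := latticeSphere d E
  have hc₀ : ∀ i, ∀ k ∉ S, c i k = 0 := fun i k hk =>
    not_imp_comm.mp (hsupp i k) (mt sq_znorm_eq_iff_mem_latticeSphere.mp hk)
  obtain rfl : ψ = fun i x => ∑ k ∈ S, c i k * eChar k x :=
    funext₂ fun i x => (hψ i x).trans (tsum_eq_sum fun k hk => by rw [hc₀ i k hk, zero_mul])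
  have hc : ∀ i j, ∑ k ∈ S, c i k * conj (c j k) = if i = j then 1 else 0 := fun i j =>
    (tsum_eq_sum fun k hk => by rw [hc₀ i k hk, zero_mul]).symm.trans (hortho i j)
  set M := min (r : ℝ) (2 * 3 ^ (d - 2) * √E ^ (d - 2))
  have hM : ∀ n ≠ 0, ((S.filter fun k => k + n ∈ S).card : ℝ) ≤ M := fun n hn =>
    le_min (by rw [hrS]; exact_mod_cast Finset.card_filter_le _ _)
      (card_latticeSphere_filter_add_mem_le_sqrt hd hE hn)
  have hr₀' : (0 : ℝ) < r := by exact_mod_cast hr₀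
  calc _ ≤ 1 / (r : ℝ) * (M * ∫ x, ‖a x‖ ^ 2 ∂(haarT d)) := by
        gcongr
        exact sum_norm_sq_integral_mul_norm_sum_sq_sub_le ha S c hc (by positivity) hM
    _ = _ := by
        rw [show min 1 (2 * 3 ^ (d - 2) * √E ^ (d - 2) / r) = M / r by
          rw [← min_div_div_right hr₀'.le, div_self hr₀'.ne']]
        ring
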